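/- Let P^{[a,d]} be a transformation of a simple polygon such that P^t is critical for at least one t ∈ [a,d]. Then there exists a smallest c ∈ [a,d] such that P^c is critical; that is, the set {t ∈ [a,d] : P^t is critical} has a minimum element. -/

import Mathlib

open Set

noncomputable section

/-- The Euclidean plane. -/
abbrev Plane : Type := EuclideanSpace ℝ (Fin 2)

/-- The `i`-th edge of the polygon with vertices `P 0, …, P (n-1)`:
the closed segment from `P i` to `P (i+1)` (indices mod `n`). -/
def polyEdge {n : ℕ} [NeZero n] (P : Fin n → Plane) (i : Fin n) : Set Plane :=
  segment ℝ (P i) (P (i + 1))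

/-- The boundary of the polygon: the union of its edges. -/
def polyBoundary {n : ℕ} [NeZero n] (P : Fin n → Plane) : Set Plane :=
  ⋃ i, polyEdge P i

/-- A simple polygon on `n ≥ 3` vertices: vertices are pairwise distinct and any
two distinct edges intersect only in common endpoints. -/
def IsSimplePolygon (n : ℕ) [NeZero n] (P : Fin n → Plane) : Prop :=
  3 ≤ n ∧ Function.Injective P ∧
    ∀ i j : Fin n, i ≠ j →
      polyEdge P i ∩ polyEdge P j ⊆
        (({P i, P (i + 1)} : Set Plane) ∩ ({P j, P (j + 1)} : Set Plane))

/-- The interior of the polygon: the union of the bounded connected components of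
the complement of the boundary. -/
def polyInterior {n : ℕ} [NeZero n] (P : Fin n → Plane) : Set Plane :=
  {x | x ∉ polyBoundary P ∧
    Bornology.IsBounded (connectedComponentIn (polyBoundary P)ᶜ x)}

/-- The exterior of the polygon: the unbounded connected component of
the complement of the boundary. -/
def polyExterior {n : ℕ} [NeZero n] (P : Fin n → Plane) : Set Plane :=
  {x | x ∉ polyBoundary P ∧
    ¬ Bornology.IsBounded (connectedComponentIn (polyBoundary P)ᶜ x)}

/-- Vertices `i` and `j` are internally visible: the open segment joining them is
contained in the interior of the polygon. -/
def Visible {n : ℕ} [NeZero n] (P : Fin n → Plane) (i j : Fin n) : Prop :=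
  openSegment ℝ (P i) (P j) ⊆ polyInterior P

/-- Vertex indices `i` and `j` are adjacent: `j ≡ i ± 1 (mod n)`. -/
def AdjacentIdx (n : ℕ) [NeZero n] (i j : Fin n) : Prop :=
  j = i + 1 ∨ i = j + 1

/-- A `k`-tuple of (distinct) vertices is critical if some straight segment contains
all of them and contains no point of the exterior of the polygon. -/
def CriticalTuple {n : ℕ} [NeZero n] (P : Fin n → Plane) {k : ℕ}
    (q : Fin k → Fin n) : Prop :=
  Function.Injective (fun m => P (q m)) ∧
    ∃ u v : Plane, (∀ m, P (q m) ∈ segment ℝ u v) ∧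
      segment ℝ u v ∩ polyExterior P = ∅

/-- A polygon is critical if it has a critical `k`-tuple for some `k ≥ 3`. -/
def IsCriticalPolygon {n : ℕ} [NeZero n] (P : Fin n → Plane) : Prop :=
  ∃ k : ℕ, 3 ≤ k ∧ ∃ q : Fin k → Fin n, CriticalTuple P q

/-- A polygon is convex if the closure of its interior is a convex set. -/
def IsConvexPolygon {n : ℕ} [NeZero n] (P : Fin n → Plane) : Prop :=
  Convex ℝ (closure (polyInterior P))

/-- A transformation of a polygon on the time interval `[a, d]`: each vertex moves
along a continuous orbit, and at each time the points form a simple polygon. -/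
def IsTransformation (n : ℕ) [NeZero n] (a d : ℝ) (F : ℝ → Fin n → Plane) : Prop :=
  a ≤ d ∧ (∀ i : Fin n, ContinuousOn (fun t => F t i) (Icc a d)) ∧
    ∀ t ∈ Icc a d, IsSimplePolygon n (F t)

/-- A transformation on `[a, d]` is visibility-preserving if visible pairs stay
visible as time increases. -/
def VisibilityPreserving (n : ℕ) [NeZero n] (a d : ℝ) (F : ℝ → Fin n → Plane) : Prop :=
  ∀ i j : Fin n, ∀ s t : ℝ, a ≤ s → s ≤ t → t ≤ d →
    Visible (F s) i j → Visible (F t) i j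

/-- A transformation on `[a, d]` is a single-vertex move if at most one orbit is
nonconstant. -/
def IsSingleVertexMoveOn (n : ℕ) [NeZero n] (a d : ℝ) (F : ℝ → Fin n → Plane) : Prop :=
  ∃ i : Fin n, ∀ j : Fin n, j ≠ i → ∀ t ∈ Icc a d, F t j = F a j

/-- `δ > 0` is a safe radius for `P` if every simple polygon `Q` whose vertices are
within distance `δ` of those of `P` has critical triples only at triples that are
already critical in `P`. -/
def SafeRadius {n : ℕ} [NeZero n] (P : Fin n → Plane) (δ : ℝ) : Prop :=
  0 < δ ∧ ∀ Q : Fin n → Plane, IsSimplePolygon n Q →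
    (∀ i : Fin n, dist (P i) (Q i) < δ) →
    ∀ q : Fin 3 → Fin n, CriticalTuple Q q → CriticalTuple P q


/-!
The set of critical times is closed in `[a, d]`, hence compact, so it has a least element.
After restricting to triples, a vertex triple is critical exactly when its points lie on
the segment joining two of them and that segment misses the exterior. For fixed indices
this is a closed condition on the vertex positions, because the exterior of a polygon is
open jointly in the vertices and the point.
-/

open Bornology Metric

section NormedSpace

variable {E : Type*} [NormedAddCommGroup E] [NormedSpace ℝ E]

theorem isClosed_setOf_mem_segment [StrictConvexSpace ℝ E] {X : Type*} [TopologicalSpace X]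
    {f g h : X → E} (hf : Continuous f) (hg : Continuous g) (hh : Continuous h) :
    IsClosed {x | f x ∈ segment ℝ (g x) (h x)} := by
  simp only [mem_segment_iff_wbtw, ← dist_add_dist_eq_iff]
  exact isClosed_eq (by fun_prop) (by fun_prop)

theorem exists_forall_mem_segment_of_forall_mem_segment {ι : Type*} [Finite ι] [Nonempty ι]
    {p : ι → E} {u v : E} (h : ∀ m, p m ∈ segment ℝ u v) :
    ∃ i j, (∀ m, p m ∈ segment ℝ (p i) (p j)) ∧ segment ℝ (p i) (p j) ⊆ segment ℝ u v := by
  refine (exists_congr fun i => exists_congr fun j =>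
    and_iff_left ((convex_segment u v).segment_subset (h i) (h j))).2 ?_
  simp only [segment_eq_image_lineMap] at h
  choose t _ hpt using h
  obtain ⟨i, hi⟩ := Finite.exists_min t
  obtain ⟨j, hj⟩ := Finite.exists_max t
  refine ⟨i, j, fun m => ?_⟩
  rw [← hpt i, ← hpt j, ← hpt m, ← image_segment, segment_eq_Icc (hi j)]
  exact mem_image_of_mem _ ⟨hi m, hj m⟩

theorem not_isBounded_image_smul_Ici {y : E} (hy : y ≠ 0) :
    ¬IsBounded ((fun t : ℝ => t • y) '' Ici 1) := by
  rw [isBounded_iff_forall_norm_le]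
  rintro ⟨C, hC⟩
  have hpos : 0 < ‖y‖ := norm_pos_iff.2 hy
  have := hC _ (mem_image_of_mem _ (le_max_left 1 ((|C| + 1) / ‖y‖)))
  rw [norm_smul, Real.norm_of_nonneg (by positivity)] at this
  have := (le_max_right 1 ((|C| + 1) / ‖y‖))
  rw [div_le_iff₀ hpos] at this
  linarith [le_abs_self C]

theorem exists_isCompact_isPreconnected_of_not_isBounded {U : Set E} (hU : IsOpen U) {x : E}
    (hx : x ∈ U) (hunb : ¬IsBounded (connectedComponentIn U x)) (M : ℝ) :
    ∃ K ⊆ U, IsCompact K ∧ IsPreconnected K ∧ x ∈ K ∧ ∃ y ∈ K, M < ‖y‖ := by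
  obtain ⟨y, hyC, hyM⟩ : ∃ y ∈ connectedComponentIn U x, M < ‖y‖ := by
    by_contra! h
    exact hunb ((isBounded_closedBall (x := 0) (r := M)).subset
      fun z hz => mem_closedBall_zero_iff.2 (h z hz))
  obtain ⟨γ, hγ⟩ := (hU.connectedComponentIn.isConnected_iff_isPathConnected.1
    (isConnected_connectedComponentIn_iff.2 hx)).joinedIn x (mem_connectedComponentIn hx) y hyC
  exact ⟨range γ, range_subset_iff.2 fun t => connectedComponentIn_subset _ _ (hγ t),
    isCompact_range γ.continuous, isPreconnected_range γ.continuous, ⟨0, γ.source⟩,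
    y, ⟨1, γ.target⟩, hyM⟩

end NormedSpace

section Polygon

variable {n : ℕ} [NeZero n]

theorem isCompact_polyBoundary (P : Fin n → Plane) : IsCompact (polyBoundary P) :=
  isCompact_iUnion fun i => by
    rw [polyEdge, segment_eq_image]
    exact isCompact_Icc.image (by fun_prop)

theorem exists_mem_polyBoundary_dist_le {P Q : Fin n → Plane} {z : Plane}
    (hz : z ∈ polyBoundary Q) : ∃ w ∈ polyBoundary P, dist z w ≤ dist Q P := by
  obtain ⟨i, s, t, hs, ht, hst, rfl⟩ := mem_iUnion.1 hz
  refine ⟨s • P i + t • P (i + 1), mem_iUnion.2 ⟨i, s, t, hs, ht, hst, rfl⟩, ?_⟩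
  have hdiff : ∀ j, Q j - P j ∈ closedBall (0 : Plane) (dist Q P) := fun j => by
    rw [mem_closedBall_zero_iff, ← dist_eq_norm]
    exact dist_le_pi_dist Q P j
  have := (convex_closedBall (0 : Plane) (dist Q P)) (hdiff i) (hdiff (i + 1)) hs ht hst
  rw [mem_closedBall_zero_iff] at this
  calc dist (s • Q i + t • Q (i + 1)) (s • P i + t • P (i + 1))
      = ‖s • (Q i - P i) + t • (Q (i + 1) - P (i + 1))‖ := by rw [dist_eq_norm]; congr 1; module
    _ ≤ dist Q P := this

theorem mem_polyExterior_of_isPreconnected {P : Fin n → Plane} {S : Set Plane} {x : Plane}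
    (hS : IsPreconnected S) (hSP : Disjoint S (polyBoundary P)) (hx : x ∈ S)
    (hunb : ¬IsBounded S) : x ∈ polyExterior P :=
  ⟨disjoint_left.1 hSP hx, fun hb => hunb (hb.subset
    (hS.subset_connectedComponentIn hx (subset_compl_iff_disjoint_right.2 hSP)))⟩

/-- A compact connected set joining `x` to far away stays off the boundary under small
perturbations of the vertices, and a ray continues it to an unbounded connected set. -/
theorem isOpen_setOf_mem_polyExterior :
    IsOpen {p : (Fin n → Plane) × Plane | p.2 ∈ polyExterior p.1} := by
  rw [Metric.isOpen_iff]
  rintro ⟨P, x⟩ ⟨hxB, hxunb⟩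
  have hBc : IsOpen (polyBoundary P)ᶜ := (isCompact_polyBoundary P).isClosed.isOpen_compl
  obtain ⟨M, hM0, hM⟩ := (isCompact_polyBoundary P).isBounded.subset_closedBall_lt 0 0
  obtain ⟨K, hKB, hK, hKconn, hxK, y, hyK, hyM⟩ :=
    exists_isCompact_isPreconnected_of_not_isBounded hBc hxB hxunb (M + 1)
  obtain ⟨δ, hδ, hδK⟩ := hK.exists_cthickening_subset_open hBc hKB
  set R := (fun t : ℝ => t • y) '' Ici 1
  have hRy : ∀ z ∈ R, ‖y‖ ≤ ‖z‖ := by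
    rintro _ ⟨t, ht, rfl⟩
    rw [norm_smul, Real.norm_of_nonneg (zero_le_one.trans ht)]
    exact le_mul_of_one_le_left (norm_nonneg y) ht
  have hS : IsPreconnected (ball x (min (δ / 2) 1) ∪ K ∪ R) :=
    (isPreconnected_ball.union x (mem_ball_self (by positivity)) hxK hKconn).union y
      (Or.inr hyK) ⟨1, self_mem_Ici, one_smul ℝ y⟩
      (isPreconnected_Ici.image _ (by fun_prop))
  refine ⟨min (δ / 2) 1, by positivity, ?_⟩
  rintro ⟨Q, x'⟩ hQx
  rw [← ball_prod_same] at hQx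
  obtain ⟨hQ, hx'⟩ := hQx
  rw [mem_ball] at hQ hx'
  refine mem_polyExterior_of_isPreconnected hS (disjoint_left.2 fun z hz hzQ => ?_)
    (Or.inl (Or.inl hx')) fun hb =>
      not_isBounded_image_smul_Ici ?_ (hb.subset subset_union_right)
  · obtain ⟨w, hwB, hzw⟩ := exists_mem_polyBoundary_dist_le (P := P) hzQ
    have hwK : w ∉ cthickening δ K := fun h => hδK h hwB
    have hr₁ := min_le_left (δ / 2) 1
    have hr₂ := min_le_right (δ / 2) 1
    rcases hz with (hz | hz) | hz
    · rw [mem_ball] at hz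
      exact hwK (mem_cthickening_of_dist_le w x δ K hxK
        (by linarith [dist_triangle w z x, dist_comm w z]))
    · exact hwK (mem_cthickening_of_dist_le w z δ K hz (by linarith [dist_comm w z]))
    · have := mem_closedBall_zero_iff.1 (hM hwB)
      linarith [hRy z hz, dist_triangle z w 0, dist_zero_right z, dist_zero_right w]
  · exact norm_pos_iff.1 (by linarith)

end Polygon

section Critical

variable {n : ℕ} [NeZero n]

theorem isClosed_setOf_segment_inter_polyExterior_eq_empty (a b : Fin n) :
    IsClosed {P : Fin n → Plane | segment ℝ (P a) (P b) ∩ polyExterior P = ∅} := by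
  have hcompl : {P : Fin n → Plane | segment ℝ (P a) (P b) ∩ polyExterior P = ∅}ᶜ =
      ⋃ t ∈ Icc (0 : ℝ) 1, (fun P : Fin n → Plane => (P, (1 - t) • P a + t • P b)) ⁻¹'
        {p | p.2 ∈ polyExterior p.1} := by
    ext P
    simp [segment_eq_image, ← nonempty_iff_ne_empty, Set.Nonempty]
  rw [← isOpen_compl_iff, hcompl]
  exact isOpen_biUnion fun t _ => isOpen_setOf_mem_polyExterior.preimage (by fun_prop)

def IsCriticalChord {k : ℕ} (P : Fin n → Plane) (q : Fin k → Fin n) (i j : Fin k) : Prop :=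
  (∀ m, P (q m) ∈ segment ℝ (P (q i)) (P (q j))) ∧
    segment ℝ (P (q i)) (P (q j)) ∩ polyExterior P = ∅

theorem isClosed_setOf_isCriticalChord {k : ℕ} (q : Fin k → Fin n) (i j : Fin k) :
    IsClosed {P : Fin n → Plane | IsCriticalChord P q i j} := by
  simp only [IsCriticalChord, ofPred_and, ofPred_forall]
  exact (isClosed_iInter fun m => isClosed_setOf_mem_segment (continuous_apply _)
    (continuous_apply _) (continuous_apply _)).inter
    (isClosed_setOf_segment_inter_polyExterior_eq_empty _ _)

theorem criticalTuple_iff_exists_isCriticalChord {k : ℕ} [NeZero k] {P : Fin n → Plane}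
    {q : Fin k → Fin n} :
    CriticalTuple P q ↔
      Function.Injective (fun m => P (q m)) ∧ ∃ i j, IsCriticalChord P q i j := by
  refine and_congr_right fun _ =>
    ⟨fun ⟨u, v, hq, huv⟩ => ?_, fun ⟨i, j, hq, hij⟩ => ⟨_, _, hq, hij⟩⟩
  obtain ⟨i, j, hq, hsub⟩ := exists_forall_mem_segment_of_forall_mem_segment hq
  exact ⟨i, j, hq, subset_eq_empty (inter_subset_inter_left _ hsub) huv⟩

theorem isCriticalPolygon_iff_exists_criticalTuple_fin_three {P : Fin n → Plane} :
    IsCriticalPolygon P ↔ ∃ q : Fin 3 → Fin n, CriticalTuple P q :=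
  ⟨fun ⟨_, hk, q, hinj, u, v, hq, huv⟩ => ⟨q ∘ Fin.castLE hk,
      hinj.comp (Fin.castLE_injective hk), u, v, fun _ => hq _, huv⟩,
    fun ⟨q, hq⟩ => ⟨3, le_rfl, q, hq⟩⟩

theorem isCriticalPolygon_iff_exists_isCriticalChord {P : Fin n → Plane}
    (hP : Function.Injective P) :
    IsCriticalPolygon P ↔
      ∃ (q : Fin 3 → Fin n) (i j : Fin 3), Function.Injective q ∧ IsCriticalChord P q i j := by
  simp only [isCriticalPolygon_iff_exists_criticalTuple_fin_three,
    criticalTuple_iff_exists_isCriticalChord, exists_and_left]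
  exact exists_congr fun q => and_congr_left' (hP.of_comp_iff q)

theorem IsTransformation.isClosed_setOf_isCriticalPolygon {a d : ℝ} {F : ℝ → Fin n → Plane}
    (hF : IsTransformation n a d F) : IsClosed {t ∈ Icc a d | IsCriticalPolygon (F t)} := by
  have hcrit : {t ∈ Icc a d | IsCriticalPolygon (F t)} = Icc a d ∩ F ⁻¹'
      ⋃ (q : Fin 3 → Fin n) (i) (j), {P | Function.Injective q ∧ IsCriticalChord P q i j} := by
    ext t
    simp only [mem_inter_iff, mem_preimage, mem_iUnion, mem_ofPred_eq]
    exact and_congr_right fun ht =>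
      isCriticalPolygon_iff_exists_isCriticalChord (hF.2.2 t ht).2.1
  rw [hcrit]
  refine (continuousOn_pi.2 hF.2.1).preimage_isClosed_of_isClosed isClosed_Icc
    (isClosed_iUnion_of_finite fun q => isClosed_iUnion_of_finite fun i =>
      isClosed_iUnion_of_finite fun j => ?_)
  rw [ofPred_and]
  exact isClosed_const.inter (isClosed_setOf_isCriticalChord q i j)

end Critical

/-- If some polygon of a transformation is critical, then there is a
smallest time at which the polygon is critical. -/
theorem statement8 {n : ℕ} [NeZero n] (a d : ℝ) (F : ℝ → Fin n → Plane)
    (hF : IsTransformation n a d F)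
    (hcrit : ∃ t ∈ Icc a d, IsCriticalPolygon (F t)) :
    ∃ c, IsLeast {t ∈ Icc a d | IsCriticalPolygon (F t)} c :=
  (isCompact_Icc.of_isClosed_subset hF.isClosed_setOf_isCriticalPolygon
    (sep_subset _ _)).exists_isLeast hcrit
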